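/- Let G be a finite undirected weighted graph with nonnegative weights and s, u, v distinct vertices. If S is a minimum s-{u,v} cut (i.e., a minimum cut separating s from both u and v) and C is the unique minimum s-v cut with C minimal by inclusion, then C ⊆ S. -/

import Mathlib

open Finset

variable {V : Type*} [Fintype V] [DecidableEq V]

noncomputable section

/-- Cost of the cut `U`: total weight of edges crossing between `U` and its complement. -/
def cutCost (w : V → V → ℝ) (U : Finset V) : ℝ :=
  ∑ u ∈ U, ∑ v ∈ Uᶜ, w u v

/-- `U` is an `S`-`T` cut: `T ⊆ U ⊆ V − S`. -/
def IsCut (S T U : Finset V) : Prop := T ⊆ U ∧ Disjoint U S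

/-- Minimum cost of an `S`-`T` cut. -/
def minCutCost (w : V → V → ℝ) (S T : Finset V) : ℝ :=
  sInf (cutCost w '' {U : Finset V | IsCut S T U})

/-- `U` is a minimum `S`-`T` cut. -/
def IsMinCut (w : V → V → ℝ) (S T U : Finset V) : Prop :=
  IsCut S T U ∧ cutCost w U = minCutCost w S T

section

variable {w : V → V → ℝ}

lemma cutCost_eq_sum_ite (U : Finset V) :
    cutCost w U = ∑ a, ∑ b, if a ∈ U ∧ b ∉ U then w a b else 0 := by
  simp [cutCost, ite_and, sum_ite, filter_not, compl_eq_univ_sdiff]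

lemma cutCost_nonneg (hw : ∀ a b, 0 ≤ w a b) (U : Finset V) : 0 ≤ cutCost w U :=
  sum_nonneg fun _ _ ↦ sum_nonneg fun _ _ ↦ hw _ _

/-- An edge leaving `A ∩ B` or `A ∪ B` leaves `A` or `B`, and one leaving both `A ∩ B` and
`A ∪ B` leaves both `A` and `B`. -/
lemma cutCost_inter_add_cutCost_union_le (hw : ∀ a b, 0 ≤ w a b) (A B : Finset V) :
    cutCost w (A ∩ B) + cutCost w (A ∪ B) ≤ cutCost w A + cutCost w B := by
  simp only [cutCost_eq_sum_ite, ← sum_add_distrib]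
  refine sum_le_sum fun a _ ↦ sum_le_sum fun b _ ↦ ?_
  by_cases haA : a ∈ A <;> by_cases haB : a ∈ B <;> by_cases hbA : b ∈ A <;>
    by_cases hbB : b ∈ B <;> simp [haA, haB, hbA, hbB, hw a b]

lemma minCutCost_le_cutCost (hw : ∀ a b, 0 ≤ w a b) {S T U : Finset V} (hU : IsCut S T U) :
    minCutCost w S T ≤ cutCost w U :=
  csInf_le ⟨0, by rintro _ ⟨U', -, rfl⟩; exact cutCost_nonneg hw U'⟩ ⟨U, hU, rfl⟩

/-- Uncrossing: `A ∩ B` is an `S`-`T` cut and `A ∪ B` an `S`-`T'` cut, so neither costs less than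
the optimum, and by submodularity neither costs more. -/
lemma IsMinCut.inter_of_subset (hw : ∀ a b, 0 ≤ w a b) {S T T' A B : Finset V}
    (hA : IsMinCut w S T A) (hB : IsMinCut w S T' B) (hT : T ⊆ T') :
    IsMinCut w S T (A ∩ B) := by
  have hinter : IsCut S T (A ∩ B) :=
    ⟨subset_inter hA.1.1 (hT.trans hB.1.1), hA.1.2.mono_left inter_subset_left⟩
  have hunion : IsCut S T' (A ∪ B) :=
    ⟨hB.1.1.trans subset_union_right, disjoint_union_left.2 ⟨hA.1.2, hB.1.2⟩⟩
  refine ⟨hinter, le_antisymm ?_ (minCutCost_le_cutCost hw hinter)⟩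
  linarith [cutCost_inter_add_cutCost_union_le hw A B, hA.2, hB.2,
    minCutCost_le_cutCost hw hunion]

lemma IsMinCut.subset_of_minimal (hw : ∀ a b, 0 ≤ w a b) {S T T' B C : Finset V}
    (hC : IsMinCut w S T C) (hCmin : ∀ U, IsMinCut w S T U → U ⊆ C → U = C)
    (hB : IsMinCut w S T' B) (hT : T ⊆ T') : C ⊆ B :=
  inter_eq_left.1 <|
    hCmin _ (hC.inter_of_subset hw hB hT) inter_subset_left

end

theorem minimal_minCut_subset_of_pair_cut_general (w : V → V → ℝ) (hw : ∀ u v, 0 ≤ w u v)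
    (s u v : V)
    (S C : Finset V)
    (hS : IsMinCut w {s} {u, v} S)
    (hC : IsMinCut w {s} {v} C)
    (hCmin : ∀ U, IsMinCut w {s} {v} U → U ⊆ C → U = C) :
    C ⊆ S :=
  hC.subset_of_minimal hw hCmin hS (by simp)

/-- The inclusion-minimal minimum `s`-`v` cut is contained in every minimum `s`-`{u,v}` cut. -/
theorem minimal_minCut_subset_of_pair_cut (w : V → V → ℝ) (hw : ∀ u v, 0 ≤ w u v)
    (hsym : ∀ u v, w u v = w v u)
    (s u v : V) (hsu : s ≠ u) (hsv : s ≠ v) (huv : u ≠ v)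
    (S C : Finset V)
    (hS : IsMinCut w {s} {u, v} S)
    (hC : IsMinCut w {s} {v} C)
    (hCmin : ∀ U, IsMinCut w {s} {v} U → U ⊆ C → U = C) :
    C ⊆ S :=
  minimal_minCut_subset_of_pair_cut_general w hw s u v S C hS hC hCmin
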